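/- arXiv:2510.04432 — 4 statements merged into one kernel-verified Lean document; each statement's English description precedes it below -/
import Mathlib

section
/- Let n, d ≥ 1 and let f, f̂ be integers with 0 ≤ f ≤ f̂ < n/2, and let κ̂ ≥ 0. If an aggregator A : (ℝ^d)ⁿ → ℝ^d is (f̂,κ̂)-robust, then A is also (f,κ̂)-robust; that is, for all x₁,…,x_n ∈ ℝ^d and every S ⊆ {1,…,n} with |S| = n − f, one has ‖A(x₁,…,x_n) − x̄_S‖² ≤ (κ̂/|S|)∑_{i∈S}‖x_i − x̄_S‖². -/
open Finset

/-- An aggregator `A : (ℝ^d)^n → ℝ^d` is `(f,κ)`-robust if for all inputs `x₁, …, x_n`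
and every `S ⊆ {1,…,n}` with `|S| = n - f`, writing `x̄_S` for the average over `S`,
`‖A x - x̄_S‖² ≤ (κ/|S|) ∑_{i∈S} ‖x_i - x̄_S‖²`. -/
def IsRobust (n d fq : ℕ) (κ : ℝ)
    (A : (Fin n → EuclideanSpace ℝ (Fin d)) → EuclideanSpace ℝ (Fin d)) : Prop :=
  ∀ (x : Fin n → EuclideanSpace ℝ (Fin d)) (S : Finset (Fin n)), S.card = n - fq →
    ‖A x - (S.card : ℝ)⁻¹ • ∑ i ∈ S, x i‖ ^ 2
      ≤ κ / (S.card : ℝ) * ∑ i ∈ S, ‖x i - (S.card : ℝ)⁻¹ • ∑ j ∈ S, x j‖ ^ 2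

/-!
Since every point of `S` lies in equally many subsets `T ⊆ S` of the smaller size `n - f̂`, the
mean over `S` is the average, over all such `T`, of the means over `T`. By convexity of `‖·‖²`,
`‖A x - x̄_S‖²` is at most the average of `‖A x - x̄_T‖²`, which `(f̂, κ̂)`-robustness bounds by
`κ̂` times the average over `T` of the variance of `x` on `T`. The variance on `T` is at most the
mean squared distance to `x̄_S`, and averaging that over all `T` gives back `κ̂` times the
variance of `x` on `S`.
-/

open scoped BigOperators RealInnerProductSpace

namespace Finset

variable {ι : Type*}

lemma sum_powersetCard_succ_sum [DecidableEq ι] {M : Type*} [AddCommMonoid M]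
    (S : Finset ι) (m : ℕ) (f : ι → M) :
    ∑ T ∈ S.powersetCard (m + 1), ∑ i ∈ T, f i = (#S - 1).choose m • ∑ i ∈ S, f i := by
  calc ∑ T ∈ S.powersetCard (m + 1), ∑ i ∈ T, f i
      = ∑ i ∈ S, ∑ T ∈ S.powersetCard (m + 1), if {i} ⊆ T then f i else 0 := by
        rw [sum_comm]
        refine sum_congr rfl fun T hT => ?_
        simp_rw [singleton_subset_iff]
        rw [sum_ite_mem, inter_eq_right.2 (mem_powersetCard.1 hT).1]
    _ = ∑ i ∈ S, (#S - 1).choose m • f i := by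
        refine sum_congr rfl fun i hi => ?_
        rw [← sum_filter, sum_const, card_filter_powersetCard_subset {i} S (m + 1)
          (singleton_subset_iff.2 hi) (by simp), card_singleton, Nat.add_sub_cancel]
    _ = (#S - 1).choose m • ∑ i ∈ S, f i := (smul_sum ..).symm

lemma expect_powersetCard_expect [DecidableEq ι] {M : Type*} [AddCommMonoid M] [Module ℚ≥0 M]
    (S : Finset ι) {m : ℕ} (hm : 0 < m) (hmS : m ≤ #S) (f : ι → M) :
    𝔼 T ∈ S.powersetCard m, 𝔼 i ∈ T, f i = 𝔼 i ∈ S, f i := by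
  obtain _ | k := m
  · omega
  have hcount : ((#S).choose (k + 1) : ℚ≥0)⁻¹ * ((k + 1 : ℕ) : ℚ≥0)⁻¹ * (#S - 1).choose k
      = (#S : ℚ≥0)⁻¹ := by
    have h := Nat.add_one_mul_choose_eq (#S - 1) k
    rw [Nat.sub_add_cancel (by omega)] at h
    have hC : ((#S).choose (k + 1) : ℚ≥0) ≠ 0 := by exact_mod_cast (Nat.choose_pos hmS).ne'
    have hS : (#S : ℚ≥0) ≠ 0 := by exact_mod_cast (show 0 < #S by omega).ne'
    rw [← mul_inv, inv_mul_eq_iff_eq_mul₀ (mul_ne_zero hC (by positivity)),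
      eq_mul_inv_iff_mul_eq₀ hS, mul_comm]
    exact_mod_cast h
  calc 𝔼 T ∈ S.powersetCard (k + 1), 𝔼 i ∈ T, f i
      = 𝔼 T ∈ S.powersetCard (k + 1), ((k + 1 : ℕ) : ℚ≥0)⁻¹ • ∑ i ∈ T, f i :=
        expect_congr rfl fun T hT => by rw [expect, (mem_powersetCard.1 hT).2]
    _ = 𝔼 i ∈ S, f i := by
        rw [expect, ← smul_sum, sum_powersetCard_succ_sum, card_powersetCard, smul_smul,
          ← Nat.cast_smul_eq_nsmul ℚ≥0, smul_smul, expect, hcount]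

lemma expect_eq_inv_card_smul_sum {E : Type*} [AddCommMonoid E] [Module ℝ E] [Module ℚ≥0 E]
    (s : Finset ι) (f : ι → E) : 𝔼 i ∈ s, f i = (#s : ℝ)⁻¹ • ∑ i ∈ s, f i := by
  rw [expect, ← NNRat.cast_smul_eq_nnqsmul ℝ]
  push_cast
  rfl

section InnerProductSpace

variable {E : Type*} [NormedAddCommGroup E] [InnerProductSpace ℝ E] [Module ℚ≥0 E]

lemma expect_inner_left (s : Finset ι) (w : ι → E) (y : E) :
    𝔼 i ∈ s, ⟪w i, y⟫ = ⟪𝔼 i ∈ s, w i, y⟫ := by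
  rw [expect_eq_inv_card_smul_sum, expect_eq_inv_card_smul_sum, real_inner_smul_left, sum_inner,
    smul_eq_mul]

lemma expect_norm_sq_eq_norm_expect_sq_add (s : Finset ι) (v : ι → E) :
    𝔼 i ∈ s, ‖v i‖ ^ 2 = ‖𝔼 i ∈ s, v i‖ ^ 2 + 𝔼 i ∈ s, ‖v i - 𝔼 j ∈ s, v j‖ ^ 2 := by
  obtain rfl | hs := s.eq_empty_or_nonempty
  · simp
  set μ := 𝔼 j ∈ s, v j
  have hcross : 𝔼 i ∈ s, ⟪v i - μ, μ⟫ = 0 := by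
    rw [expect_inner_left, expect_sub_distrib, expect_const hs, sub_self, inner_zero_left]
  have hsplit : ∀ i, ‖v i‖ ^ 2 = ‖v i - μ‖ ^ 2 + 2 * ⟪v i - μ, μ⟫ + ‖μ‖ ^ 2 := fun i => by
    rw [← norm_add_sq_real, sub_add_cancel]
  simp_rw [hsplit, expect_add_distrib, ← mul_expect, hcross, expect_const hs]
  ring

lemma norm_expect_sq_le (s : Finset ι) (v : ι → E) :
    ‖𝔼 i ∈ s, v i‖ ^ 2 ≤ 𝔼 i ∈ s, ‖v i‖ ^ 2 := by
  rw [expect_norm_sq_eq_norm_expect_sq_add]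
  exact le_add_of_nonneg_right (expect_nonneg fun _ _ => by positivity)

lemma expect_norm_sub_expect_sq_le (s : Finset ι) (x : ι → E) (c : E) :
    𝔼 i ∈ s, ‖x i - 𝔼 j ∈ s, x j‖ ^ 2 ≤ 𝔼 i ∈ s, ‖x i - c‖ ^ 2 := by
  obtain rfl | hs := s.eq_empty_or_nonempty
  · simp
  have hshift : ∀ i, x i - c - 𝔼 j ∈ s, (x j - c) = x i - 𝔼 j ∈ s, x j := fun i => by
    rw [expect_sub_distrib, expect_const hs, sub_sub_sub_cancel_right]
  rw [expect_norm_sq_eq_norm_expect_sq_add s (fun i => x i - c)]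
  simp_rw [hshift]
  exact le_add_of_nonneg_left (by positivity)

end InnerProductSpace

end Finset

lemma isRobust_iff_expect {n d fq : ℕ} {κ : ℝ}
    {A : (Fin n → EuclideanSpace ℝ (Fin d)) → EuclideanSpace ℝ (Fin d)} :
    IsRobust n d fq κ A ↔ ∀ (x : Fin n → EuclideanSpace ℝ (Fin d)) (S : Finset (Fin n)),
      #S = n - fq → ‖A x - 𝔼 i ∈ S, x i‖ ^ 2 ≤ κ * 𝔼 i ∈ S, ‖x i - 𝔼 j ∈ S, x j‖ ^ 2 := by
  simp_rw [IsRobust, expect_eq_inv_card_smul_sum, smul_eq_mul, div_eq_mul_inv, mul_assoc]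

theorem stmt_1_general (n d f fhat : ℕ)
    (hf : f ≤ fhat) (hfn : 2 * fhat < n) (khat : ℝ) (hkhat : 0 ≤ khat)
    (A : (Fin n → EuclideanSpace ℝ (Fin d)) → EuclideanSpace ℝ (Fin d))
    (hA : IsRobust n d fhat khat A) : IsRobust n d f khat A := by
  rw [isRobust_iff_expect] at hA ⊢
  intro x S hS
  set μ := 𝔼 i ∈ S, x i
  set P := S.powersetCard (n - fhat)
  have hm : 0 < n - fhat := by omega
  have hmS : n - fhat ≤ #S := by omega
  have hP : P.Nonempty := powersetCard_nonempty.2 hmS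
  calc ‖A x - μ‖ ^ 2
      = ‖𝔼 T ∈ P, (A x - 𝔼 i ∈ T, x i)‖ ^ 2 := by
        rw [expect_sub_distrib, expect_const hP, expect_powersetCard_expect S hm hmS]
    _ ≤ 𝔼 T ∈ P, ‖A x - 𝔼 i ∈ T, x i‖ ^ 2 := norm_expect_sq_le P _
    _ ≤ 𝔼 T ∈ P, khat * 𝔼 i ∈ T, ‖x i - 𝔼 j ∈ T, x j‖ ^ 2 :=
        expect_le_expect fun T hT => hA x T (mem_powersetCard.1 hT).2
    _ ≤ 𝔼 T ∈ P, khat * 𝔼 i ∈ T, ‖x i - μ‖ ^ 2 :=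
        expect_le_expect fun T _ =>
          mul_le_mul_of_nonneg_left (expect_norm_sub_expect_sq_le T x μ) hkhat
    _ = khat * 𝔼 i ∈ S, ‖x i - μ‖ ^ 2 := by rw [← mul_expect, expect_powersetCard_expect S hm hmS]

/-- If `0 ≤ f ≤ f̂ < n/2` and `A` is `(f̂,κ̂)`-robust, then `A` is also `(f,κ̂)`-robust. -/
theorem stmt_1 (n d f fhat : ℕ) (hn : 1 ≤ n) (hd : 1 ≤ d)
    (hf : f ≤ fhat) (hfn : 2 * fhat < n) (khat : ℝ) (hkhat : 0 ≤ khat)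
    (A : (Fin n → EuclideanSpace ℝ (Fin d)) → EuclideanSpace ℝ (Fin d))
    (hA : IsRobust n d fhat khat A) : IsRobust n d f khat A :=
  stmt_1_general n d f fhat hf hfn khat hkhat A hA
end

section
/- Let n, d ≥ 1, let f, f̂ be integers with 0 ≤ f ≤ f̂ < n/2, and let x₁,…,x_n ∈ ℝ^d. For each k ∈ {1,…,n} let N_k be a set of (n−f̂) nearest neighbors of x_k and set y_k = (1/(n−f̂))∑_{i∈N_k} x_i. Then for every S ⊆ {1,…,n} with |S| = n − f, writing x̄_S = (1/|S|)∑_{i∈S} x_i and ȳ_S = (1/|S|)∑_{k∈S} y_k, it holds that ‖ȳ_S − x̄_S‖² + (1/|S|)∑_{k∈S}‖y_k − ȳ_S‖² ≤ (12f̂/(n−f))·(1/|S|)∑_{i∈S}‖x_i − x̄_S‖². -/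
/-!
Put `u_i = x_i - x̄_S`. Since `|N_k| = n - f̂`, `(n - f̂)(y_k - x̄_S) = ∑_{i ∈ N_k} u_i`, and since
`∑_{i ∈ S} u_i = 0` this equals `∑_{i ∈ N_k \ S} (x_i - x_k) + |N_k \ S| u_k - ∑_{j ∈ S \ N_k} u_j`,
with at most `f` points in `N_k \ S` and at most `f̂` in `S \ N_k`. Every point of `N_k \ S` is
closer to `x_k` than every point of `S \ N_k`, so the first term is controlled by the pairwise
distances inside `S`, whose total is `2|S|` times the variance; the last term is controlled by the
variance through `S \ N_k` and through its complement `S ∩ N_k`. Minkowski's inequality gives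
`∑_{k ∈ S} ‖∑_{N_k} u_i‖² ≤ K² ∑_{i ∈ S} ‖u_i‖²` with `K = √(2f|S|) + f + √(f̂(|S| - f̂/2))`, the
bias–variance identity turns the left-hand side into `|S|⁻¹ ∑_{k ∈ S} ‖y_k - x̄_S‖²`, and
`K² (n - f) ≤ 12 f̂ (n - f̂)²` is an elementary inequality.
-/

open Finset

/-- `N` is a set of `(n - f̂)` nearest neighbors of `x_k` among `x₁, …, x_n`. -/
def IsNN (n d fhat : ℕ) (z : Fin n → EuclideanSpace ℝ (Fin d)) (k : Fin n)
    (N : Finset (Fin n)) : Prop :=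
  N.card = n - fhat ∧ ∀ i ∈ N, ∀ j ∉ N, ‖z i - z k‖ ≤ ‖z j - z k‖

variable {ι E : Type*}

theorem card_sdiff_le_of_card_eq [Fintype ι] [DecidableEq ι] {s t : Finset ι} {a : ℕ}
    (ht : #t = Fintype.card ι - a) : #(s \ t) ≤ a := by
  have hsub : s \ t ⊆ tᶜ := fun i hi => mem_compl.2 (mem_sdiff.1 hi).2
  have := card_le_card hsub
  rw [card_compl, ht] at this
  omega

theorem sum_add_sq_le_of_sum_sq_le (s : Finset ι) {p q : ι → ℝ} {α β V : ℝ}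
    (hα : 0 ≤ α) (hβ : 0 ≤ β) (hV : 0 ≤ V)
    (hp : ∑ i ∈ s, p i ^ 2 ≤ α ^ 2 * V) (hq : ∑ i ∈ s, q i ^ 2 ≤ β ^ 2 * V) :
    ∑ i ∈ s, (p i + q i) ^ 2 ≤ (α + β) ^ 2 * V := by
  have hcross : ∑ i ∈ s, p i * q i ≤ α * β * V := by
    refine (abs_le_of_sq_le_sq' ?_ (by positivity)).2
    calc (∑ i ∈ s, p i * q i) ^ 2 ≤ (∑ i ∈ s, p i ^ 2) * ∑ i ∈ s, q i ^ 2 :=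
          sum_mul_sq_le_sq_mul_sq s p q
      _ ≤ (α ^ 2 * V) * (β ^ 2 * V) :=
          mul_le_mul hp hq (sum_nonneg fun i _ => sq_nonneg _) (by positivity)
      _ = (α * β * V) ^ 2 := by ring
  have hexpand : ∑ i ∈ s, (p i + q i) ^ 2
      = ∑ i ∈ s, p i ^ 2 + 2 * ∑ i ∈ s, p i * q i + ∑ i ∈ s, q i ^ 2 := by
    simp only [add_sq, sum_add_distrib, mul_sum, mul_assoc]
  rw [hexpand]
  nlinarith

theorem sq_sum_le_mul_sum_sq_of_forall_le {B T : Finset ι} {r : ι → ℝ} {f : ℕ}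
    (hr : ∀ i ∈ B, 0 ≤ r i) (hle : ∀ i ∈ B, ∀ j ∈ T, r i ≤ r j)
    (hBT : #B ≤ #T) (hBf : #B ≤ f) :
    (∑ i ∈ B, r i) ^ 2 ≤ f * ∑ j ∈ T, r j ^ 2 := by
  rcases T.eq_empty_or_nonempty with rfl | hT
  · simp_all
  have hT0 : (0 : ℝ) < #T := by exact_mod_cast hT.card_pos
  have hcount : #T * ∑ i ∈ B, r i ≤ #B * ∑ j ∈ T, r j := by
    calc (#T : ℝ) * ∑ i ∈ B, r i = ∑ i ∈ B, ∑ _j ∈ T, r i := by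
          simp only [sum_const, nsmul_eq_mul, mul_sum]
      _ ≤ ∑ i ∈ B, ∑ j ∈ T, r j :=
          sum_le_sum fun i hi => sum_le_sum fun j hj => hle i hi j hj
      _ = #B * ∑ j ∈ T, r j := by rw [sum_const, nsmul_eq_mul]
  have hB2 : (#B : ℝ) * #B ≤ #T * f := by exact_mod_cast Nat.mul_le_mul hBT hBf
  refine le_of_mul_le_mul_left ?_ (pow_pos hT0 2)
  calc (#T : ℝ) ^ 2 * (∑ i ∈ B, r i) ^ 2 = (#T * ∑ i ∈ B, r i) ^ 2 := by ring
    _ ≤ (#B * ∑ j ∈ T, r j) ^ 2 :=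
        pow_le_pow_left₀ (mul_nonneg hT0.le (sum_nonneg hr)) hcount 2
    _ = #B * #B * (∑ j ∈ T, r j) ^ 2 := by ring
    _ ≤ #T * f * (#T * ∑ j ∈ T, r j ^ 2) :=
        mul_le_mul hB2 sq_sum_le_card_mul_sum_sq (sq_nonneg _) (by positivity)
    _ = (#T : ℝ) ^ 2 * (f * ∑ j ∈ T, r j ^ 2) := by ring

/-- Young's inequality on the three cross terms, with weights chosen so that what remains
is a cubic that is nonnegative on `0 ≤ f ≤ f̂ ≤ n / 2`. -/
theorem sq_sqrt_add_add_sqrt_mul_le {f fh n : ℝ} (hf : 0 ≤ f) (hffh : f ≤ fh) (hn : 2 * fh ≤ n) :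
    (√(2 * f * (n - f)) + f + √(fh * (n - f - fh / 2))) ^ 2 * (n - f)
      ≤ 12 * fh * (n - fh) ^ 2 := by
  set P := √(2 * f * (n - f))
  set Q := √(fh * (n - f - fh / 2))
  have hP : P ^ 2 = 2 * f * (n - f) := Real.sq_sqrt (by nlinarith)
  have hQ : Q ^ 2 = fh * (n - f - fh / 2) := Real.sq_sqrt (by nlinarith)
  have hyoung : (P + f + Q) ^ 2
      ≤ 4 * f * (n - f) + (389 / 70) * f ^ 2 + (691 / 221) * fh * (n - f - fh / 2) := by
    nlinarith [sq_nonneg ((7 / 20) * P - f), sq_nonneg ((13 / 20) * P - Q),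
      sq_nonneg ((17 / 10) * f - Q)]
  have h1 : 0 ≤ fh - f := by linarith
  have h2 : 0 ≤ n - 2 * fh := by linarith
  calc (P + f + Q) ^ 2 * (n - f)
      ≤ (4 * f * (n - f) + (389 / 70) * f ^ 2 + (691 / 221) * fh * (n - f - fh / 2)) * (n - f) :=
        mul_le_mul_of_nonneg_right hyoung (by linarith)
    _ ≤ 12 * fh * (n - fh) ^ 2 := by
        nlinarith [mul_nonneg hf (sq_nonneg (2 * f - fh)),
          mul_nonneg (mul_nonneg h1 h1) h1, mul_nonneg (mul_nonneg h1 h1) h2,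
          mul_nonneg (mul_nonneg h1 h2) h2, mul_nonneg (mul_nonneg hf h2) h2,
          mul_nonneg (mul_nonneg hf h1) h2, mul_nonneg (mul_nonneg hf hf) h2,
          mul_nonneg (mul_nonneg hf h1) h1, mul_nonneg (mul_nonneg hf hf) hf]

theorem sum_sub_inv_card_smul_sum_eq_zero [AddCommGroup E] [Module ℝ E] {s : Finset ι}
    (hs : s.Nonempty) (x : ι → E) : ∑ i ∈ s, (x i - (#s : ℝ)⁻¹ • ∑ j ∈ s, x j) = 0 := by
  have hs0 : (#s : ℝ) ≠ 0 := by exact_mod_cast hs.card_ne_zero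
  rw [sum_sub_distrib, sum_const, ← Nat.cast_smul_eq_nsmul ℝ, smul_inv_smul₀ hs0, sub_self]

theorem sum_sub_eq_sum_sdiff_add_card_smul_sub [AddCommGroup E] [DecidableEq ι]
    {S N : Finset ι} {x : ι → E} {w : E} (hw : ∑ i ∈ S, (x i - w) = 0) (k : ι) :
    ∑ i ∈ N, (x i - w)
      = ∑ i ∈ N \ S, (x i - x k) + #(N \ S) • (x k - w) - ∑ j ∈ S \ N, (x j - w) := by
  have hinter : ∑ i ∈ N ∩ S, (x i - w) = -∑ j ∈ S \ N, (x j - w) := by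
    rw [inter_comm, eq_neg_iff_add_eq_zero, sum_inter_add_sum_sdiff, hw]
  have hout : ∑ i ∈ N \ S, (x i - w) = ∑ i ∈ N \ S, (x i - x k) + #(N \ S) • (x k - w) := by
    rw [← sum_const, ← sum_add_distrib]
    exact sum_congr rfl fun i _ => by abel
  rw [← sum_inter_add_sum_sdiff N S, hinter, hout]
  abel

section Normed

variable [SeminormedAddCommGroup E]

theorem norm_sum_sq_le_card_mul_sum_norm_sq (s : Finset ι) (v : ι → E) :
    ‖∑ i ∈ s, v i‖ ^ 2 ≤ #s * ∑ i ∈ s, ‖v i‖ ^ 2 :=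
  (pow_le_pow_left₀ (norm_nonneg _) (norm_sum_le _ _) 2).trans sq_sum_le_card_mul_sum_sq

/-- Both `T` and its complement `S \ T` have the same sum up to sign; bounding `‖∑_T u‖²`
through each of them and taking the right convex combination gives the estimate. -/
theorem norm_sum_sq_mul_le_of_sum_eq_zero [DecidableEq ι] {S T : Finset ι} {u : ι → E} {t : ℕ}
    (hTS : T ⊆ S) (hT : #T ≤ t) (hu : ∑ i ∈ S, u i = 0) :
    ‖∑ i ∈ T, u i‖ ^ 2 * (#S + t) ≤ t * #S * ∑ i ∈ S, ‖u i‖ ^ 2 := by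
  set U := ∑ i ∈ T, ‖u i‖ ^ 2
  have hviaT : ‖∑ i ∈ T, u i‖ ^ 2 ≤ t * U :=
    (norm_sum_sq_le_card_mul_sum_norm_sq T u).trans <|
      mul_le_mul_of_nonneg_right (by exact_mod_cast hT) (sum_nonneg fun i _ => sq_nonneg _)
  have hviaCompl : ‖∑ i ∈ T, u i‖ ^ 2 ≤ #S * (∑ i ∈ S, ‖u i‖ ^ 2 - U) := by
    have hneg : ∑ i ∈ T, u i = -∑ i ∈ S \ T, u i := by
      rw [eq_neg_iff_add_eq_zero, add_comm, sum_sdiff hTS, hu]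
    rw [hneg, norm_neg, ← sum_sdiff_eq_sub hTS]
    exact (norm_sum_sq_le_card_mul_sum_norm_sq _ u).trans <|
      mul_le_mul_of_nonneg_right (by exact_mod_cast card_le_card sdiff_subset)
        (sum_nonneg fun i _ => sq_nonneg _)
  nlinarith [mul_le_mul_of_nonneg_left hviaT (Nat.cast_nonneg (α := ℝ) #S),
    mul_le_mul_of_nonneg_left hviaCompl (Nat.cast_nonneg (α := ℝ) t)]

theorem sum_norm_sum_sdiff_sq_le [DecidableEq ι] {S : Finset ι} {N : ι → Finset ι} {u : ι → E}
    {t : ℕ} (hT : ∀ k ∈ S, #(S \ N k) ≤ t) (ht : t ≤ #S) (hu : ∑ i ∈ S, u i = 0) :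
    ∑ k ∈ S, ‖∑ j ∈ S \ N k, u j‖ ^ 2 ≤ t * (#S - t / 2) * ∑ i ∈ S, ‖u i‖ ^ 2 := by
  rcases S.eq_empty_or_nonempty with rfl | hS
  · simp
  have hc : (0 : ℝ) < #S := by exact_mod_cast hS.card_pos
  have htc : (t : ℝ) ≤ #S := by exact_mod_cast ht
  have hV : 0 ≤ ∑ i ∈ S, ‖u i‖ ^ 2 := sum_nonneg fun i _ => sq_nonneg _
  refine le_of_mul_le_mul_right ?_ (by positivity : (0 : ℝ) < #S + t)
  calc (∑ k ∈ S, ‖∑ j ∈ S \ N k, u j‖ ^ 2) * (#S + t)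
      ≤ ∑ _k ∈ S, t * #S * ∑ i ∈ S, ‖u i‖ ^ 2 := by
        rw [sum_mul]
        exact sum_le_sum fun k hk => norm_sum_sq_mul_le_of_sum_eq_zero sdiff_subset (hT k hk) hu
    _ = #S * (t * #S * ∑ i ∈ S, ‖u i‖ ^ 2) := by rw [sum_const, nsmul_eq_mul]
    _ ≤ t * (#S - t / 2) * (∑ i ∈ S, ‖u i‖ ^ 2) * (#S + t) := by
        nlinarith [mul_nonneg (mul_nonneg (Nat.cast_nonneg (α := ℝ) t)
          (Nat.cast_nonneg (α := ℝ) t)) (mul_nonneg (sub_nonneg.2 htc) hV)]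

theorem norm_sum_sub_le [DecidableEq ι] {S N : Finset ι} {x : ι → E} {w : E} {f : ℕ}
    (hw : ∑ i ∈ S, (x i - w) = 0) (k : ι) (hB : #(N \ S) ≤ f) :
    ‖∑ i ∈ N, (x i - w)‖
      ≤ ∑ i ∈ N \ S, ‖x i - x k‖ + f * ‖x k - w‖ + ‖∑ j ∈ S \ N, (x j - w)‖ := by
  rw [sum_sub_eq_sum_sdiff_add_card_smul_sub hw k]
  have hsmul : ‖#(N \ S) • (x k - w)‖ ≤ f * ‖x k - w‖ :=
    norm_nsmul_le.trans <| mul_le_mul_of_nonneg_right (by exact_mod_cast hB) (norm_nonneg _)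
  have := norm_sum_le (N \ S) fun i => x i - x k
  have := norm_sub_le (∑ i ∈ N \ S, (x i - x k) + #(N \ S) • (x k - w)) (∑ j ∈ S \ N, (x j - w))
  have := norm_add_le (∑ i ∈ N \ S, (x i - x k)) (#(N \ S) • (x k - w))
  linarith

end Normed

section InnerProduct

variable [NormedAddCommGroup E] [InnerProductSpace ℝ E]

theorem sum_norm_sub_sq_eq_add {s : Finset ι} {z : ι → E} {zb : E}
    (hzb : ∑ k ∈ s, (z k - zb) = 0) (w : E) :
    ∑ k ∈ s, ‖z k - w‖ ^ 2 = ∑ k ∈ s, ‖z k - zb‖ ^ 2 + #s * ‖zb - w‖ ^ 2 := by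
  have hsplit : ∀ k ∈ s, ‖z k - w‖ ^ 2
      = ‖z k - zb‖ ^ 2 + 2 * inner ℝ (z k - zb) (zb - w) + ‖zb - w‖ ^ 2 := fun k _ => by
    rw [← norm_add_sq_real, sub_add_sub_cancel]
  rw [sum_congr rfl hsplit, sum_add_distrib, sum_add_distrib, ← mul_sum, ← sum_inner, hzb,
    inner_zero_left, sum_const, nsmul_eq_mul]
  ring

theorem sum_sum_norm_sub_sq_eq {s : Finset ι} {x : ι → E} {w : E}
    (hw : ∑ i ∈ s, (x i - w) = 0) :
    ∑ k ∈ s, ∑ j ∈ s, ‖x j - x k‖ ^ 2 = 2 * #s * ∑ j ∈ s, ‖x j - w‖ ^ 2 := by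
  rw [sum_congr rfl fun k _ => sum_norm_sub_sq_eq_add hw (x k), sum_add_distrib, ← mul_sum,
    sum_const, nsmul_eq_mul]
  simp only [norm_sub_rev w]
  ring

theorem sq_norm_sub_add_inv_card_mul_sum_norm_sub_sq {s : Finset ι} (hs : s.Nonempty)
    (y : ι → E) (w : E) :
    ‖(#s : ℝ)⁻¹ • ∑ k ∈ s, y k - w‖ ^ 2
        + (#s : ℝ)⁻¹ * ∑ k ∈ s, ‖y k - (#s : ℝ)⁻¹ • ∑ j ∈ s, y j‖ ^ 2
      = (#s : ℝ)⁻¹ * ∑ k ∈ s, ‖y k - w‖ ^ 2 := by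
  have hs0 : (#s : ℝ) ≠ 0 := by exact_mod_cast hs.card_ne_zero
  rw [sum_norm_sub_sq_eq_add (sum_sub_inv_card_smul_sum_eq_zero hs y) w]
  field_simp
  ring

theorem sum_norm_sum_sub_sq_le [DecidableEq ι] {S : Finset ι} {N : ι → Finset ι} {x : ι → E}
    {w : E} {f fh : ℕ} (hw : ∑ i ∈ S, (x i - w) = 0)
    (hNN : ∀ k ∈ S, ∀ i ∈ N k, ∀ j ∉ N k, ‖x i - x k‖ ≤ ‖x j - x k‖)
    (hB : ∀ k ∈ S, #(N k \ S) ≤ f) (hT : ∀ k ∈ S, #(S \ N k) ≤ fh)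
    (hBT : ∀ k ∈ S, #(N k \ S) ≤ #(S \ N k)) (hfh : fh ≤ #S) :
    ∑ k ∈ S, ‖∑ i ∈ N k, (x i - w)‖ ^ 2
      ≤ (√(2 * f * #S) + f + √(fh * (#S - fh / 2))) ^ 2 * ∑ i ∈ S, ‖x i - w‖ ^ 2 := by
  set V := ∑ i ∈ S, ‖x i - w‖ ^ 2
  have hV : 0 ≤ V := sum_nonneg fun i _ => sq_nonneg _
  set a := fun k => ∑ i ∈ N k \ S, ‖x i - x k‖
  set e := fun k => ‖∑ j ∈ S \ N k, (x j - w)‖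
  have ha : ∑ k ∈ S, a k ^ 2 ≤ √(2 * f * #S) ^ 2 * V := by
    have hfar : ∀ k ∈ S, a k ^ 2 ≤ f * ∑ j ∈ S, ‖x j - x k‖ ^ 2 := fun k hk =>
      (sq_sum_le_mul_sum_sq_of_forall_le (fun i _ => norm_nonneg _)
        (fun i hi j hj => hNN k hk i (mem_sdiff.1 hi).1 j (mem_sdiff.1 hj).2) (hBT k hk)
        (hB k hk)).trans <|
      mul_le_mul_of_nonneg_left
        (sum_le_sum_of_subset_of_nonneg sdiff_subset fun _ _ _ => sq_nonneg _) (by positivity)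
    calc ∑ k ∈ S, a k ^ 2 ≤ f * ∑ k ∈ S, ∑ j ∈ S, ‖x j - x k‖ ^ 2 := by
          rw [mul_sum]; exact sum_le_sum hfar
      _ = √(2 * f * #S) ^ 2 * V := by
          rw [sum_sum_norm_sub_sq_eq hw, Real.sq_sqrt (by positivity)]; ring
  have hb : ∑ k ∈ S, ((f : ℝ) * ‖x k - w‖) ^ 2 = (f : ℝ) ^ 2 * V := by
    simp only [mul_pow, V, mul_sum]
  have he : ∑ k ∈ S, e k ^ 2 ≤ √(fh * (#S - fh / 2)) ^ 2 * V := by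
    have hfhc : (fh : ℝ) ≤ #S := by exact_mod_cast hfh
    rw [Real.sq_sqrt (by nlinarith)]
    exact sum_norm_sum_sdiff_sq_le hT hfh hw
  calc ∑ k ∈ S, ‖∑ i ∈ N k, (x i - w)‖ ^ 2 ≤ ∑ k ∈ S, (a k + f * ‖x k - w‖ + e k) ^ 2 :=
        sum_le_sum fun k hk => pow_le_pow_left₀ (norm_nonneg _) (norm_sum_sub_le hw k (hB k hk)) 2
    _ ≤ _ := sum_add_sq_le_of_sum_sq_le S (by positivity) (Real.sqrt_nonneg _) hV
        (sum_add_sq_le_of_sum_sq_le S (Real.sqrt_nonneg _) (Nat.cast_nonneg _) hV ha hb.le) he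

theorem card_mul_sum_norm_sub_sq_le [Fintype ι] [DecidableEq ι] {f fh : ℕ} (hf : f ≤ fh)
    (hfh : 2 * fh < Fintype.card ι) {x y : ι → E} {N : ι → Finset ι}
    (hNcard : ∀ k, #(N k) = Fintype.card ι - fh)
    (hNN : ∀ k, ∀ i ∈ N k, ∀ j ∉ N k, ‖x i - x k‖ ≤ ‖x j - x k‖)
    (hy : ∀ k, y k = ((Fintype.card ι : ℝ) - fh)⁻¹ • ∑ i ∈ N k, x i)
    {S : Finset ι} (hS : #S = Fintype.card ι - f) {w : E} (hw : ∑ i ∈ S, (x i - w) = 0) :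
    #S * ∑ k ∈ S, ‖y k - w‖ ^ 2 ≤ 12 * fh * ∑ i ∈ S, ‖x i - w‖ ^ 2 := by
  set n := Fintype.card ι
  set V := ∑ i ∈ S, ‖x i - w‖ ^ 2
  set K := √(2 * f * #S) + f + √(fh * (#S - fh / 2))
  have hc : (#S : ℝ) = n - f := by rw [hS, Nat.cast_sub (by omega)]
  have hm : (0 : ℝ) < n - fh := sub_pos.2 (by exact_mod_cast (by omega : fh < n))
  have hyk : ∀ k, ((n : ℝ) - fh) • (y k - w) = ∑ i ∈ N k, (x i - w) := fun k => by
    rw [smul_sub, hy k, smul_inv_smul₀ hm.ne', sum_sub_distrib, sum_const, hNcard k,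
      ← Nat.cast_smul_eq_nsmul ℝ, Nat.cast_sub (by omega)]
  have hY : ((n : ℝ) - fh) ^ 2 * ∑ k ∈ S, ‖y k - w‖ ^ 2 ≤ K ^ 2 * V := by
    calc _ = ∑ k ∈ S, ‖∑ i ∈ N k, (x i - w)‖ ^ 2 := by
          simp_rw [mul_sum, ← hyk, norm_smul, mul_pow, Real.norm_of_nonneg hm.le]
      _ ≤ K ^ 2 * V := sum_norm_sum_sub_sq_le hw (fun k _ => hNN k)
          (fun k _ => card_sdiff_le_of_card_eq hS) (fun k _ => card_sdiff_le_of_card_eq (hNcard k))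
          (fun k _ => card_sdiff_le_card_sdiff_iff.2 (by rw [hNcard k, hS]; omega)) (by omega)
  have hK : K ^ 2 * #S ≤ 12 * fh * ((n : ℝ) - fh) ^ 2 := by
    have h := sq_sqrt_add_add_sqrt_mul_le (n := n) (Nat.cast_nonneg f)
      (by exact_mod_cast hf : (f : ℝ) ≤ fh) (by exact_mod_cast hfh.le)
    rwa [← hc] at h
  have hV : 0 ≤ V := sum_nonneg fun i _ => sq_nonneg _
  refine le_of_mul_le_mul_left ?_ (pow_pos hm 2)
  calc _ = (#S : ℝ) * (((n : ℝ) - fh) ^ 2 * ∑ k ∈ S, ‖y k - w‖ ^ 2) := by ring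
    _ ≤ (#S : ℝ) * (K ^ 2 * V) := by gcongr
    _ = K ^ 2 * #S * V := by ring
    _ ≤ 12 * fh * ((n : ℝ) - fh) ^ 2 * V := by gcongr
    _ = _ := by ring

end InnerProduct

theorem stmt_9_general (n d f fhat : ℕ)
    (hf : f ≤ fhat) (hfn : 2 * fhat < n)
    (x : Fin n → EuclideanSpace ℝ (Fin d))
    (N : Fin n → Finset (Fin n)) (hN : ∀ k, IsNN n d fhat x k (N k))
    (y : Fin n → EuclideanSpace ℝ (Fin d))
    (hy : ∀ k, y k = ((n : ℝ) - fhat)⁻¹ • ∑ i ∈ N k, x i)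
    (S : Finset (Fin n)) (hS : S.card = n - f) :
    ‖(S.card : ℝ)⁻¹ • ∑ k ∈ S, y k - (S.card : ℝ)⁻¹ • ∑ i ∈ S, x i‖ ^ 2
      + (S.card : ℝ)⁻¹ * ∑ k ∈ S, ‖y k - (S.card : ℝ)⁻¹ • ∑ j ∈ S, y j‖ ^ 2
      ≤ (12 * (fhat : ℝ) / ((n : ℝ) - f)) *
          ((S.card : ℝ)⁻¹ * ∑ i ∈ S, ‖x i - (S.card : ℝ)⁻¹ • ∑ j ∈ S, x j‖ ^ 2) := by
  have hS0 : S.Nonempty := card_pos.1 (by omega)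
  have hc : (#S : ℝ) = n - f := by rw [hS, Nat.cast_sub (by omega)]
  have hbound := card_mul_sum_norm_sub_sq_le (ι := Fin n) hf (by simpa using hfn)
    (fun k => by simpa using (hN k).1) (fun k => (hN k).2) (by simpa using hy)
    (by simpa using hS) (sum_sub_inv_card_smul_sum_eq_zero hS0 x)
  rw [sq_norm_sub_add_inv_card_mul_sum_norm_sub_sq hS0, ← hc]
  field_simp
  simpa only [one_div] using hbound

/-- For `0 ≤ f ≤ f̂ < n/2` and the `f̂`-NNM points `y_k = (1/(n-f̂)) ∑_{i∈N_k} x_i`: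
for every `S` with `|S| = n - f`,
`‖ȳ_S - x̄_S‖² + (1/|S|) ∑_{k∈S} ‖y_k - ȳ_S‖² ≤ (12f̂/(n-f)) (1/|S|) ∑_{i∈S} ‖x_i - x̄_S‖²`. -/
theorem stmt_9 (n d f fhat : ℕ) (hn : 1 ≤ n) (hd : 1 ≤ d)
    (hf : f ≤ fhat) (hfn : 2 * fhat < n)
    (x : Fin n → EuclideanSpace ℝ (Fin d))
    (N : Fin n → Finset (Fin n)) (hN : ∀ k, IsNN n d fhat x k (N k))
    (y : Fin n → EuclideanSpace ℝ (Fin d))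
    (hy : ∀ k, y k = ((n : ℝ) - fhat)⁻¹ • ∑ i ∈ N k, x i)
    (S : Finset (Fin n)) (hS : S.card = n - f) :
    ‖(S.card : ℝ)⁻¹ • ∑ k ∈ S, y k - (S.card : ℝ)⁻¹ • ∑ i ∈ S, x i‖ ^ 2
      + (S.card : ℝ)⁻¹ * ∑ k ∈ S, ‖y k - (S.card : ℝ)⁻¹ • ∑ j ∈ S, y j‖ ^ 2
      ≤ (12 * (fhat : ℝ) / ((n : ℝ) - f)) *
          ((S.card : ℝ)⁻¹ * ∑ i ∈ S, ‖x i - (S.card : ℝ)⁻¹ • ∑ j ∈ S, x j‖ ^ 2) :=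
  stmt_9_general n d f fhat hf hfn x N hN y hy S hS
end

section
/- Let n, d ≥ 1, let f, f̂ be integers with 0 ≤ f ≤ f̂ < n/2, and let x₁,…,x_n ∈ ℝ^d. For each k ∈ {1,…,n} let N_k be a set of (n−f̂) nearest neighbors of x_k, and let k* ∈ {1,…,n} satisfy ∑_{i∈N_{k*}}‖x_{k*} − x_i‖² = min_{k∈{1,…,n}} ∑_{i∈N_k}‖x_k − x_i‖². Then for every S ⊆ {1,…,n} with |S| = n − f, writing x̄_S = (1/|S|)∑_{i∈S} x_i, it holds that ∑_{i∈N_{k*}}‖x_{k*} − x_i‖² ≤ 2∑_{i∈S}‖x_i − x̄_S‖². -/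
open Finset

/-!
Compare `k*` with a point `x_{k₀}`, `k₀ ∈ S`, whose squared distance to the mean `x̄_S` is at most
the average `(1/|S|) ∑_{i∈S} ‖x_i - x̄_S‖²`. Since `f ≤ f̂`, `S` contains a set `T` of size `n - f̂`,
and the nearest neighbors `N_{k₀}` minimise the sum of squared distances to `x_{k₀}` among all sets
of that size. Hence, by the choice of `k*`,
`∑_{i∈N_{k*}} ‖x_{k*} - x_i‖² ≤ ∑_{i∈T} ‖x_{k₀} - x_i‖² ≤ ∑_{i∈S} ‖x_{k₀} - x_i‖²
  = |S| ‖x_{k₀} - x̄_S‖² + ∑_{i∈S} ‖x_i - x̄_S‖² ≤ 2 ∑_{i∈S} ‖x_i - x̄_S‖²`.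
-/

namespace Finset

section Order

variable {α M : Type*} [AddCommMonoid M] [LinearOrder M] [IsOrderedAddMonoid M]

lemma sum_le_sum_of_card_eq_of_forall_le {A B : Finset α} (g : α → M) (hcard : #A = #B)
    (hg : ∀ a ∈ A, ∀ b ∈ B, g a ≤ g b) : ∑ a ∈ A, g a ≤ ∑ b ∈ B, g b := by
  rcases B.eq_empty_or_nonempty with rfl | hB
  · simp [card_eq_zero.mp hcard]
  obtain ⟨b₀, hb₀, hmin⟩ := B.exists_min_image g hB
  calc ∑ a ∈ A, g a ≤ #A • g b₀ := sum_le_card_nsmul A g _ fun a ha => hg a ha b₀ hb₀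
    _ = #B • g b₀ := by rw [hcard]
    _ ≤ ∑ b ∈ B, g b := card_nsmul_le_sum B g _ hmin

lemma sum_le_sum_of_card_eq_of_forall_le_notMem [DecidableEq α] {N T : Finset α} (g : α → M)
    (hcard : #N = #T) (hN : ∀ i ∈ N, ∀ j ∉ N, g i ≤ g j) :
    ∑ i ∈ N, g i ≤ ∑ i ∈ T, g i := by
  have hsdiff : ∑ i ∈ N \ T, g i ≤ ∑ i ∈ T \ N, g i :=
    sum_le_sum_of_card_eq_of_forall_le g (card_sdiff_comm hcard) fun a ha b hb =>
      hN a (mem_sdiff.mp ha).1 b (mem_sdiff.mp hb).2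
  calc ∑ i ∈ N, g i = ∑ i ∈ N ∩ T, g i + ∑ i ∈ N \ T, g i :=
        (sum_inter_add_sum_sdiff N T g).symm
    _ ≤ ∑ i ∈ T ∩ N, g i + ∑ i ∈ T \ N, g i := by rw [inter_comm]; gcongr
    _ = ∑ i ∈ T, g i := sum_inter_add_sum_sdiff T N g

end Order

section InnerProductSpace

variable {ι E : Type*} [NormedAddCommGroup E] [InnerProductSpace ℝ E]

lemma sum_sub_mean_eq_zero (S : Finset ι) (x : ι → E) :
    ∑ i ∈ S, (x i - (#S : ℝ)⁻¹ • ∑ j ∈ S, x j) = 0 := by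
  rcases S.eq_empty_or_nonempty with rfl | hS
  · simp
  rw [sum_sub_distrib, sum_const, ← Nat.cast_smul_eq_nsmul ℝ,
    smul_inv_smul₀ (Nat.cast_ne_zero.mpr hS.card_pos.ne'), sub_self]

lemma sum_norm_sub_sq_eq_of_sum_sub_eq_zero (S : Finset ι) (x : ι → E) {m : E}
    (hm : ∑ i ∈ S, (x i - m) = 0) (a : E) :
    ∑ i ∈ S, ‖a - x i‖ ^ 2 = #S * ‖a - m‖ ^ 2 + ∑ i ∈ S, ‖x i - m‖ ^ 2 := by
  have hsplit : ∀ i, ‖a - x i‖ ^ 2 = ‖a - m‖ ^ 2 - 2 * inner ℝ (a - m) (x i - m) + ‖x i - m‖ ^ 2 :=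
    fun i => by rw [← norm_sub_sq_real, sub_sub_sub_cancel_right]
  simp only [hsplit, sum_add_distrib, sum_sub_distrib, sum_const, ← mul_sum, ← inner_sum, hm,
    inner_zero_right, mul_zero, sub_zero, nsmul_eq_mul]

lemma Nonempty.exists_sum_norm_sub_sq_le_two_mul {S : Finset ι} (hS : S.Nonempty) (x : ι → E) :
    ∃ k ∈ S, ∑ i ∈ S, ‖x k - x i‖ ^ 2 ≤ 2 * ∑ i ∈ S, ‖x i - (#S : ℝ)⁻¹ • ∑ j ∈ S, x j‖ ^ 2 := by
  set m := (#S : ℝ)⁻¹ • ∑ j ∈ S, x j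
  obtain ⟨k, hk, hle⟩ := exists_le_of_sum_le hS
    (f := fun k => #S * ‖x k - m‖ ^ 2) (g := fun _ => ∑ i ∈ S, ‖x i - m‖ ^ 2)
    (by simp only [← mul_sum, sum_const, nsmul_eq_mul, le_refl])
  refine ⟨k, hk, ?_⟩
  rw [sum_norm_sub_sq_eq_of_sum_sub_eq_zero S x (sum_sub_mean_eq_zero S x)]
  linarith

end InnerProductSpace

end Finset

lemma IsNN.sum_norm_sub_sq_le {n d fhat : ℕ} {z : Fin n → EuclideanSpace ℝ (Fin d)} {k : Fin n}
    {N T : Finset (Fin n)} (hN : IsNN n d fhat z k N) (hT : #T = n - fhat) :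
    ∑ i ∈ N, ‖z k - z i‖ ^ 2 ≤ ∑ i ∈ T, ‖z k - z i‖ ^ 2 :=
  sum_le_sum_of_card_eq_of_forall_le_notMem _ (hN.1.trans hT.symm) fun i hi j hj => by
    simpa only [norm_sub_rev (z k)] using pow_le_pow_left₀ (norm_nonneg _) (hN.2 i hi j hj) 2

theorem stmt_10_general (n d f fhat : ℕ)
    (hf : f ≤ fhat) (hfn : 2 * fhat < n)
    (x : Fin n → EuclideanSpace ℝ (Fin d))
    (N : Fin n → Finset (Fin n)) (hN : ∀ k, IsNN n d fhat x k (N k))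
    (kstar : Fin n)
    (hks : ∀ k, ∑ i ∈ N kstar, ‖x kstar - x i‖ ^ 2 ≤ ∑ i ∈ N k, ‖x k - x i‖ ^ 2)
    (S : Finset (Fin n)) (hS : S.card = n - f) :
    ∑ i ∈ N kstar, ‖x kstar - x i‖ ^ 2
      ≤ 2 * ∑ i ∈ S, ‖x i - (S.card : ℝ)⁻¹ • ∑ j ∈ S, x j‖ ^ 2 := by
  have hSne : S.Nonempty := card_pos.mp (by omega)
  obtain ⟨k₀, -, hk₀⟩ := hSne.exists_sum_norm_sub_sq_le_two_mul x
  obtain ⟨T, hTS, hT⟩ := exists_subset_card_eq (show n - fhat ≤ #S by omega)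
  calc ∑ i ∈ N kstar, ‖x kstar - x i‖ ^ 2
      ≤ ∑ i ∈ N k₀, ‖x k₀ - x i‖ ^ 2 := hks k₀
    _ ≤ ∑ i ∈ T, ‖x k₀ - x i‖ ^ 2 := (hN k₀).sum_norm_sub_sq_le hT
    _ ≤ ∑ i ∈ S, ‖x k₀ - x i‖ ^ 2 := sum_le_sum_of_subset_of_nonneg hTS fun _ _ _ => by positivity
    _ ≤ _ := hk₀

/-- For the `f̂`-Krum selection `k*` (minimizing `∑_{i∈N_k} ‖x_k - x_i‖²`), every `S`
with `|S| = n - f` (where `0 ≤ f ≤ f̂ < n/2`) satisfies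
`∑_{i∈N_{k*}} ‖x_{k*} - x_i‖² ≤ 2 ∑_{i∈S} ‖x_i - x̄_S‖²`. -/
theorem stmt_10 (n d f fhat : ℕ) (hn : 1 ≤ n) (hd : 1 ≤ d)
    (hf : f ≤ fhat) (hfn : 2 * fhat < n)
    (x : Fin n → EuclideanSpace ℝ (Fin d))
    (N : Fin n → Finset (Fin n)) (hN : ∀ k, IsNN n d fhat x k (N k))
    (kstar : Fin n)
    (hks : ∀ k, ∑ i ∈ N kstar, ‖x kstar - x i‖ ^ 2 ≤ ∑ i ∈ N k, ‖x k - x i‖ ^ 2)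
    (S : Finset (Fin n)) (hS : S.card = n - f) :
    ∑ i ∈ N kstar, ‖x kstar - x i‖ ^ 2
      ≤ 2 * ∑ i ∈ S, ‖x i - (S.card : ℝ)⁻¹ • ∑ j ∈ S, x j‖ ^ 2 :=
  stmt_10_general n d f fhat hf hfn x N hN kstar hks S hS
end

section
/- Let d ≥ 1, let 𝓗 be a finite nonempty index set, and for each k ∈ 𝓗 let ℓ_k : ℝ^d → ℝ be L-smooth for some L > 0. Set ℓ_𝓗 = (1/|𝓗|)∑_{k∈𝓗} ℓ_k and assume the heterogeneity bound (1/|𝓗|)∑_{k∈𝓗}‖∇ℓ_k(w') − ∇ℓ_𝓗(w')‖² ≤ G² for all w' ∈ ℝ^d. Let γ > 0 and H ≥ 1 satisfy L²γ²H(H−1) ≤ 1/2, fix w ∈ ℝ^d, and for each k ∈ 𝓗 define v_{k,0} = w and v_{k,h+1} = v_{k,h} − γ∇ℓ_k(v_{k,h}) for 0 ≤ h < H. Then ∑_{k∈𝓗} ∑_{h=0}^{H−1}‖v_{k,h} − w‖² ≤ 4γ²|𝓗|H²(H−1)(G² + ‖∇ℓ_𝓗(w)‖²). -/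
/-!
Unrolling the recursion gives `w - v_{k,h} = γ ∑_{j<h} ∇ℓ_k(v_{k,j})`, so by Cauchy–Schwarz
`‖v_{k,h} - w‖² ≤ γ² h ∑_{j<h} ‖∇ℓ_k(v_{k,j})‖²`. Smoothness and the heterogeneity bound control
each gradient by `2L²‖v_{k,j} - w‖² + 4‖∇ℓ_k(w) - ∇ℓ_𝓗(w)‖² + 4‖∇ℓ_𝓗(w)‖²`, so the total drift
`D_h = ∑_k ‖v_{k,h} - w‖²` satisfies `D_h ≤ 2L²γ² h ∑_{j<h} D_j + 4γ²|𝓗| h² (G² + ‖∇ℓ_𝓗(w)‖²)`.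
Summing over `h < H`, the step-size condition bounds the first term by half of `∑_h D_h`,
which is then absorbed by the left-hand side.
-/

open Finset

theorem sum_range_natCast (n : ℕ) : ∑ h ∈ range n, (h : ℝ) = n * (n - 1) / 2 := by
  induction n with
  | zero => simp
  | succ m ih => rw [sum_range_succ, ih]; push_cast; ring

theorem sum_range_natCast_sq_le (n : ℕ) :
    ∑ h ∈ range n, (h : ℝ) ^ 2 ≤ n ^ 2 * (n - 1) / 2 :=
  calc ∑ h ∈ range n, (h : ℝ) ^ 2 ≤ ∑ h ∈ range n, (n : ℝ) * h := by
        gcongr with h hh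
        rw [sq]
        gcongr
        exact_mod_cast (mem_range.1 hh).le
    _ = n ^ 2 * (n - 1) / 2 := by rw [← mul_sum, sum_range_natCast]; ring

/-- A discrete Gronwall inequality on `range H`. -/
theorem sum_range_le_of_le_mul_sum_range {D : ℕ → ℝ} {A B : ℝ} {H : ℕ}
    (hD : ∀ h, 0 ≤ D h) (hA : 0 ≤ A) (hB : 0 ≤ B)
    (hrec : ∀ h < H, D h ≤ A * h * ∑ j ∈ range h, D j + B * h ^ 2)
    (hAH : A * H * (H - 1) ≤ 1) :
    ∑ h ∈ range H, D h ≤ B * H ^ 2 * (H - 1) := by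
  set S := ∑ h ∈ range H, D h
  have hS : 0 ≤ S := sum_nonneg fun h _ => hD h
  have hpartial : ∀ h ≤ H, ∑ j ∈ range h, D j ≤ S := fun h hh =>
    sum_le_sum_of_subset_of_nonneg (range_subset_range.2 hh) fun j _ _ => hD j
  have hS_le : S ≤ A * S * (H * (H - 1) / 2) + B * ∑ h ∈ range H, (h : ℝ) ^ 2 :=
    calc S ≤ ∑ h ∈ range H, (A * S * h + B * h ^ 2) := by
          refine sum_le_sum fun h hh => (hrec h (mem_range.1 hh)).trans ?_
          have := hpartial h (mem_range.1 hh).le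
          gcongr ?_ + _
          rw [mul_right_comm]
          gcongr
      _ = A * S * (H * (H - 1) / 2) + B * ∑ h ∈ range H, (h : ℝ) ^ 2 := by
          rw [sum_add_distrib, ← mul_sum, ← mul_sum, sum_range_natCast]
  have hsq := mul_le_mul_of_nonneg_left (sum_range_natCast_sq_le H) hB
  nlinarith [mul_le_mul_of_nonneg_right hAH hS]

theorem sub_iterate_eq_smul_sum {R E : Type*} [Ring R] [AddCommGroup E] [Module R E]
    {g : E → E} {γ : R} {v : ℕ → E} (hrec : ∀ h, v (h + 1) = v h - γ • g (v h)) (h : ℕ) :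
    v 0 - v h = γ • ∑ j ∈ range h, g (v j) := by
  induction h with
  | zero => simp
  | succ h ih => rw [hrec, sum_range_succ, smul_add, ← ih]; abel

section Drift

variable {E : Type*} [SeminormedAddCommGroup E]

theorem norm_sq_le_of_norm_sub_le {a b c : E} {r : ℝ} (hab : ‖a - b‖ ≤ r) :
    ‖a‖ ^ 2 ≤ 2 * r ^ 2 + 4 * ‖b - c‖ ^ 2 + 4 * ‖c‖ ^ 2 := by
  have htri : ‖a‖ ≤ r + ‖b - c‖ + ‖c‖ :=
    calc ‖a‖ = ‖(a - b) + (b - c) + c‖ := by abel_nf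
      _ ≤ ‖a - b‖ + ‖b - c‖ + ‖c‖ := norm_add₃_le
      _ ≤ r + ‖b - c‖ + ‖c‖ := by gcongr
  have hr : 0 ≤ r := (norm_nonneg _).trans hab
  nlinarith [norm_nonneg a, norm_nonneg (b - c), norm_nonneg c,
    sq_nonneg (r - ‖b - c‖ - ‖c‖), sq_nonneg (‖b - c‖ - ‖c‖)]

variable [NormedSpace ℝ E]

theorem norm_iterate_sub_sq_le {g : E → E} {γ : ℝ} {v : ℕ → E}
    (hrec : ∀ h, v (h + 1) = v h - γ • g (v h)) (h : ℕ) :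
    ‖v h - v 0‖ ^ 2 ≤ γ ^ 2 * h * ∑ j ∈ range h, ‖g (v j)‖ ^ 2 := by
  rw [← norm_neg, neg_sub, sub_iterate_eq_smul_sum hrec, norm_smul, mul_pow, Real.norm_eq_abs,
    sq_abs, mul_assoc]
  gcongr
  calc ‖∑ j ∈ range h, g (v j)‖ ^ 2 ≤ (∑ j ∈ range h, ‖g (v j)‖) ^ 2 := by
        gcongr
        exact norm_sum_le _ _
    _ ≤ h * ∑ j ∈ range h, ‖g (v j)‖ ^ 2 := by
        simpa using sq_sum_le_card_mul_sum_sq (s := range h) (f := fun j => ‖g (v j)‖)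

variable {ι : Type*} [Fintype ι] {g : ι → E → E} {v : ι → ℕ → E} {w c : E} {L G γ : ℝ}

theorem sum_norm_iterate_sub_sq_le (hlip : ∀ k x, ‖g k x - g k w‖ ≤ L * ‖x - w‖)
    (hhet : ∑ k, ‖g k w - c‖ ^ 2 ≤ Fintype.card ι * G ^ 2) (hv0 : ∀ k, v k 0 = w)
    (hrec : ∀ k h, v k (h + 1) = v k h - γ • g k (v k h)) (h : ℕ) :
    ∑ k, ‖v k h - w‖ ^ 2 ≤ 2 * L ^ 2 * γ ^ 2 * h * ∑ j ∈ range h, ∑ k, ‖v k j - w‖ ^ 2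
      + 4 * γ ^ 2 * Fintype.card ι * (G ^ 2 + ‖c‖ ^ 2) * h ^ 2 :=
  calc ∑ k, ‖v k h - w‖ ^ 2
      ≤ ∑ k, γ ^ 2 * h * ∑ j ∈ range h,
          (2 * (L * ‖v k j - w‖) ^ 2 + 4 * ‖g k w - c‖ ^ 2 + 4 * ‖c‖ ^ 2) := by
        gcongr with k
        refine (hv0 k ▸ norm_iterate_sub_sq_le (hrec k) h).trans ?_
        gcongr with j
        exact norm_sq_le_of_norm_sub_le (hlip k _)
    _ = γ ^ 2 * h * (2 * L ^ 2 * ∑ j ∈ range h, ∑ k, ‖v k j - w‖ ^ 2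
          + h * (4 * ∑ k, ‖g k w - c‖ ^ 2 + 4 * Fintype.card ι * ‖c‖ ^ 2)) := by
        rw [← mul_sum, sum_comm]
        simp only [sum_add_distrib, sum_const, card_range, card_univ, ← mul_sum, mul_pow,
          nsmul_eq_mul]
        ring
    _ ≤ γ ^ 2 * h * (2 * L ^ 2 * ∑ j ∈ range h, ∑ k, ‖v k j - w‖ ^ 2
          + h * (4 * (Fintype.card ι * G ^ 2) + 4 * Fintype.card ι * ‖c‖ ^ 2)) := by
        gcongr
    _ = _ := by ring

theorem sum_sum_norm_iterate_sub_sq_le {H : ℕ} (hlip : ∀ k x, ‖g k x - g k w‖ ≤ L * ‖x - w‖)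
    (hhet : ∑ k, ‖g k w - c‖ ^ 2 ≤ Fintype.card ι * G ^ 2)
    (hstep : L ^ 2 * γ ^ 2 * H * (H - 1) ≤ 1 / 2) (hv0 : ∀ k, v k 0 = w)
    (hrec : ∀ k h, v k (h + 1) = v k h - γ • g k (v k h)) :
    ∑ k, ∑ h ∈ range H, ‖v k h - w‖ ^ 2
      ≤ 4 * γ ^ 2 * Fintype.card ι * H ^ 2 * (H - 1) * (G ^ 2 + ‖c‖ ^ 2) := by
  rw [sum_comm]
  convert sum_range_le_of_le_mul_sum_range (fun h => sum_nonneg fun k _ => sq_nonneg _)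
    (by positivity) (by positivity)
    (fun h _ => sum_norm_iterate_sub_sq_le hlip hhet hv0 hrec h) (by linarith) using 1
  ring

end Drift

theorem stmt_14_general (d : ℕ) (ι : Type) [Fintype ι]
    (ℓ : ι → EuclideanSpace ℝ (Fin d) → ℝ) (L G : ℝ)
    (lH : EuclideanSpace ℝ (Fin d) → ℝ)
    (hsmooth : ∀ (k : ι) (w w' : EuclideanSpace ℝ (Fin d)),
      ‖gradient (ℓ k) w' - gradient (ℓ k) w‖ ≤ L * ‖w' - w‖)
    (hhetero : ∀ w' : EuclideanSpace ℝ (Fin d),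
      (Fintype.card ι : ℝ)⁻¹ * ∑ k, ‖gradient (ℓ k) w' - gradient lH w'‖ ^ 2 ≤ G ^ 2)
    (γ : ℝ) (H : ℕ)
    (hstep : L ^ 2 * γ ^ 2 * (H : ℝ) * ((H : ℝ) - 1) ≤ 1 / 2)
    (w : EuclideanSpace ℝ (Fin d)) (v : ι → ℕ → EuclideanSpace ℝ (Fin d))
    (hv0 : ∀ k, v k 0 = w)
    (hrec : ∀ (k : ι) (h : ℕ), v k (h + 1) = v k h - γ • gradient (ℓ k) (v k h)) :
    ∑ k, ∑ h ∈ Finset.range H, ‖v k h - w‖ ^ 2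
      ≤ 4 * γ ^ 2 * (Fintype.card ι : ℝ) * (H : ℝ) ^ 2 * ((H : ℝ) - 1)
          * (G ^ 2 + ‖gradient lH w‖ ^ 2) := by
  have hhet : ∑ k, ‖gradient (ℓ k) w - gradient lH w‖ ^ 2 ≤ Fintype.card ι * G ^ 2 := by
    rcases isEmpty_or_nonempty ι with hι | hι
    · simp
    · rw [← inv_mul_le_iff₀ (by positivity)]
      exact hhetero w
  exact sum_sum_norm_iterate_sub_sq_le (fun k => hsmooth k w) hhet hstep hv0 hrec

/-- Lemma (total drift of local gradient descent over heterogeneous clients):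
if each `ℓ_k` is `L`-smooth, the heterogeneity bound holds, `L²γ²H(H-1) ≤ 1/2`,
and each client runs `v_{k,0} = w`, `v_{k,h+1} = v_{k,h} - γ∇ℓ_k(v_{k,h})`, then
`∑_k ∑_{h<H} ‖v_{k,h} - w‖² ≤ 4γ²|𝓗|H²(H-1)(G² + ‖∇ℓ_𝓗(w)‖²)`. -/
theorem stmt_14 (d : ℕ) (hd : 1 ≤ d) (ι : Type) [Fintype ι] [Nonempty ι]
    (ℓ : ι → EuclideanSpace ℝ (Fin d) → ℝ) (L G : ℝ) (hL : 0 < L)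
    (lH : EuclideanSpace ℝ (Fin d) → ℝ)
    (hlH : lH = fun w => (Fintype.card ι : ℝ)⁻¹ * ∑ k, ℓ k w)
    (hdiff : ∀ k, Differentiable ℝ (ℓ k))
    (hsmooth : ∀ (k : ι) (w w' : EuclideanSpace ℝ (Fin d)),
      ‖gradient (ℓ k) w' - gradient (ℓ k) w‖ ≤ L * ‖w' - w‖)
    (hhetero : ∀ w' : EuclideanSpace ℝ (Fin d),
      (Fintype.card ι : ℝ)⁻¹ * ∑ k, ‖gradient (ℓ k) w' - gradient lH w'‖ ^ 2 ≤ G ^ 2)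
    (γ : ℝ) (hγ : 0 < γ) (H : ℕ) (hH : 1 ≤ H)
    (hstep : L ^ 2 * γ ^ 2 * (H : ℝ) * ((H : ℝ) - 1) ≤ 1 / 2)
    (w : EuclideanSpace ℝ (Fin d)) (v : ι → ℕ → EuclideanSpace ℝ (Fin d))
    (hv0 : ∀ k, v k 0 = w)
    (hrec : ∀ (k : ι) (h : ℕ), v k (h + 1) = v k h - γ • gradient (ℓ k) (v k h)) :
    ∑ k, ∑ h ∈ Finset.range H, ‖v k h - w‖ ^ 2
      ≤ 4 * γ ^ 2 * (Fintype.card ι : ℝ) * (H : ℝ) ^ 2 * ((H : ℝ) - 1)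
          * (G ^ 2 + ‖gradient lH w‖ ^ 2) :=
  stmt_14_general d ι ℓ L G lH hsmooth hhetero γ H hstep w v hv0 hrec
end
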